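/- Every n ∈ N lies in the relative interior of 𝒞(F_n) for exactly one face F_n of Q. Moreover, for every n ∈ N, the set U_n := {m ∈ N : F_m ⊆ F_n} equals the union of the relative interiors of those cones 𝒞(F), for F a face of Q, that contain n, and U_n is a neighborhood of n in N. -/

import Mathlib

/-!
The face `F_n` is the set where the functional `B n` attains its minimum on `Q`, and
`n ∈ 𝒞(F)` exactly when `F ⊆ F_n`, since a functional minimal at a relative interior point of
`F` is constant on `F`. Moving from any `m ∈ 𝒞(F_n)` slightly beyond `n` keeps every vertex
outside `F_n` strictly above the minimum, so `n` lies in the relative interior of `𝒞(F_n)`;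
conversely, writing a face as `F_m` (surjectivity of `B`) and prolonging the segment from `m`
through `n` shows `F_n ⊆ F` whenever `n` is relatively interior to `𝒞(F)`. For `m` close to `n`
every vertex not minimal for `n` stays not minimal for `m`, hence `F_m ⊆ F_n`.
-/

/-- The (algebraic) relative interior of a convex set `C`:  `x ∈ C` such that every
segment in `C` ending at `x` can be prolonged a bit beyond `x` inside `C`. -/
def algRelInt {W : Type*} [AddCommGroup W] [Module ℝ W] (C : Set W) : Set W :=
  {x ∈ C | ∀ y ∈ C, ∃ t : ℝ, 1 < t ∧ y + t • (x - y) ∈ C}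

/-- `F` is a (nonempty, exposed) face of `Q`: the set of points of `Q` where some
linear functional attains its minimum over `Q`. -/
def IsFace {W : Type*} [AddCommGroup W] [Module ℝ W] (Q F : Set W) : Prop :=
  F.Nonempty ∧
    ∃ (f : W →ₗ[ℝ] ℝ) (c : ℝ), (∀ q ∈ Q, c ≤ f q) ∧ F = {q ∈ Q | f q = c}

variable {V N : Type*}
  [NormedAddCommGroup V] [NormedSpace ℝ V]
  [NormedAddCommGroup N] [NormedSpace ℝ N]

/-- The normal cone `𝒞(F) ⊆ N` of a face `F` of `Q`, where `N` is identified with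
the dual space `V*` via the pairing `B`: the elements `n` with `B n (q - p) ≥ 0`
for all `q ∈ Q`, `p` any point in the relative interior of `F`. -/
def normalConeB (B : N →ₗ[ℝ] Module.Dual ℝ V) (Q F : Set V) : Set N :=
  {n | ∀ p ∈ algRelInt F, ∀ q ∈ Q, 0 ≤ B n (q - p)}

open Filter Topology

section Polytope

variable {W : Type*} [AddCommGroup W] [Module ℝ W]

def minFace (Q : Set W) (f : W →ₗ[ℝ] ℝ) : Set W :=
  {q ∈ Q | ∀ y ∈ Q, f q ≤ f y}

variable {Q F : Set W} {f : W →ₗ[ℝ] ℝ}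

lemma minFace_subset : minFace Q f ⊆ Q := fun _ hq => hq.1

lemma Convex.minFace (hQ : Convex ℝ Q) : Convex ℝ (minFace Q f) := by
  rintro x ⟨hxQ, hx⟩ y ⟨hyQ, hy⟩ a b ha hb hab
  refine ⟨hQ hxQ hyQ ha hb hab, fun z hz => ?_⟩
  calc f (a • x + b • y) = a * f x + b * f y := by simp
    _ ≤ a * f z + b * f z := by gcongr; exacts [hx z hz, hy z hz]
    _ = f z := by rw [← add_mul, hab, one_mul]

lemma isFace_minFace (h : (minFace Q f).Nonempty) : IsFace Q (minFace Q f) := by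
  obtain ⟨x, hxQ, hx⟩ := h
  refine ⟨⟨x, hxQ, hx⟩, f, f x, hx, Set.ext fun q => ⟨fun hq => ⟨hq.1, ?_⟩, fun hq => ⟨hq.1, ?_⟩⟩⟩
  · exact le_antisymm (hq.2 x hxQ) (hx q hq.1)
  · exact fun y hy => hq.2 ▸ hx y hy

lemma IsFace.subset (hF : IsFace Q F) : F ⊆ Q := by
  obtain ⟨-, f, c, -, rfl⟩ := hF
  exact fun _ hq => hq.1

lemma IsFace.exists_eq_minFace (hF : IsFace Q F) : ∃ f : W →ₗ[ℝ] ℝ, F = minFace Q f := by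
  obtain ⟨⟨x, hx⟩, f, c, hc, rfl⟩ := hF
  refine ⟨f, Set.ext fun q => ⟨fun hq => ⟨hq.1, fun y hy => hq.2 ▸ hc y hy⟩, fun hq => ⟨hq.1, ?_⟩⟩⟩
  exact le_antisymm ((hq.2 x hx.1).trans_eq hx.2) (hc q hq.1)

lemma subset_minFace_of_mem_algRelInt {p : W} (hFQ : F ⊆ Q) (hp : p ∈ algRelInt F)
    (hpQ : p ∈ minFace Q f) : F ⊆ minFace Q f := by
  intro x hx
  obtain ⟨t, ht, hxt⟩ := hp.2 x hx
  have h := hpQ.2 _ (hFQ hxt)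
  simp only [map_add, map_smul, map_sub, smul_eq_mul] at h
  have hxp : f x ≤ f p := by nlinarith
  exact ⟨hFQ hx, fun y hy => hxp.trans (hpQ.2 y hy)⟩

variable (s : Finset W)

lemma mem_minFace_convexHull {p : W} (hp : p ∈ convexHull ℝ (s : Set W))
    (h : ∀ x ∈ s, f p ≤ f x) : p ∈ minFace (convexHull ℝ ↑s) f :=
  ⟨hp, fun _ hy => convexHull_min h (convex_halfSpace_ge f.isLinear (f p)) hy⟩

lemma minFace_convexHull_nonempty (hs : s.Nonempty) :
    (minFace (convexHull ℝ (s : Set W)) f).Nonempty := by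
  obtain ⟨x, hx, hmin⟩ := s.exists_min_image f hs
  exact ⟨x, mem_minFace_convexHull s (subset_convexHull ℝ _ hx) hmin⟩

lemma minFace_convexHull_eq :
    minFace (convexHull ℝ (s : Set W)) f =
      convexHull ℝ (↑s ∩ minFace (convexHull ℝ ↑s) f) := by
  classical
  refine subset_antisymm (fun q hq => ?_)
    (convexHull_min Set.inter_subset_right (convex_convexHull ℝ _).minFace)
  obtain ⟨w, hw₀, hw₁, hwq⟩ := Finset.mem_convexHull.1 hq.1
  have hterm : ∀ x ∈ s, w x * (f x - f q) = 0 := by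
    refine (Finset.sum_eq_zero_iff_of_nonneg fun x hx =>
      mul_nonneg (hw₀ x hx) (sub_nonneg.2 (hq.2 x (subset_convexHull ℝ _ hx)))).1 ?_
    rw [← hwq, Finset.centerMass_eq_of_sum_1 _ _ hw₁]
    simp [mul_sub, Finset.sum_sub_distrib, ← Finset.sum_mul, hw₁]
  rw [← hwq, ← Finset.centerMass_filter_ne_zero]
  refine Finset.centerMass_mem_convexHull _ (fun x hx => hw₀ x (Finset.mem_filter.1 hx).1)
    (by rw [Finset.sum_filter_ne_zero, hw₁]; exact one_pos) fun x hx => ?_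
  obtain ⟨hxs, hwx⟩ := Finset.mem_filter.1 hx
  have hfx : f x = f q := sub_eq_zero.1 ((mul_eq_zero.1 (hterm x hxs)).resolve_left hwx)
  exact ⟨hxs, subset_convexHull ℝ _ hxs, fun y hy => hfx ▸ hq.2 y hy⟩

/-- The witness is the centroid `c`: with `k` vertices, `y + (1 + 1/k) • (c - y)` has
nonnegative barycentric weights for every `y` in the hull. -/
lemma algRelInt_convexHull_nonempty {t : Set W} (ht : t.Finite) (hne : t.Nonempty) :
    (algRelInt (convexHull ℝ t)).Nonempty := by
  lift t to Finset W using ht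
  set k : ℝ := (t.card : ℝ)
  have hk : 0 < k := by simpa [k] using hne
  have hcard : ∑ _x ∈ t, k⁻¹ = 1 := by simp [k, hk.ne']
  refine ⟨∑ x ∈ t, k⁻¹ • x, Finset.mem_convexHull'.2 ⟨fun _ => k⁻¹, fun _ _ => by positivity,
    hcard, rfl⟩, fun y hy => ?_⟩
  obtain ⟨w, hw₀, hw₁, rfl⟩ := Finset.mem_convexHull'.1 hy
  refine ⟨1 + k⁻¹, by simpa using hk,
    Finset.mem_convexHull'.2 ⟨fun x => (1 + k⁻¹) * k⁻¹ - k⁻¹ * w x, fun x hx => ?_, ?_, ?_⟩⟩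
  · have : w x ≤ 1 := hw₁ ▸ Finset.single_le_sum hw₀ hx
    have : 0 < k⁻¹ := by positivity
    nlinarith
  · simp only [Finset.sum_sub_distrib, ← Finset.mul_sum, hw₁, hcard]
    ring
  · simp only [sub_smul, Finset.sum_sub_distrib, mul_smul, ← Finset.smul_sum]
    module

lemma IsFace.algRelInt_nonempty (hF : IsFace (convexHull ℝ (s : Set W)) F) :
    (algRelInt F).Nonempty := by
  obtain ⟨f, rfl⟩ := hF.exists_eq_minFace
  have hne := hF.1
  rw [minFace_convexHull_eq] at hne ⊢
  exact algRelInt_convexHull_nonempty (s.finite_toSet.inter_of_left _)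
    (convexHull_nonempty_iff.1 hne)

end Polytope

lemma exists_pos_forall_mul_le {ι : Type*} (s : Finset ι) {a b : ι → ℝ}
    (hb : ∀ i ∈ s, 0 ≤ b i) (hab : ∀ i ∈ s, b i = 0 → a i ≤ 0) :
    ∃ ε > 0, ∀ i ∈ s, ε * a i ≤ b i := by
  have hev : ∀ i ∈ s, ∀ᶠ ε in 𝓝[>] (0 : ℝ), ε * a i ≤ b i := by
    intro i hi
    rcases (hb i hi).eq_or_lt with h | h
    · filter_upwards [self_mem_nhdsWithin] with ε hε
      exact h ▸ mul_nonpos_of_nonneg_of_nonpos (le_of_lt hε) (hab i hi h.symm)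
    · have : Tendsto (fun ε => ε * a i) (𝓝[>] 0) (𝓝 0) := by
        exact ((continuous_id.mul continuous_const).tendsto' 0 0 (zero_mul _)).mono_left
          nhdsWithin_le_nhds
      exact (this.eventually (gt_mem_nhds h)).mono fun _ => le_of_lt
  obtain ⟨ε, hε, hεpos⟩ := (((eventually_all_finset s).2 hev).and self_mem_nhdsWithin).exists
  exact ⟨ε, hεpos, hε⟩

section NormalFan

variable (B : N →ₗ[ℝ] Module.Dual ℝ V) (s : Finset V)

lemma map_add_smul_sub_apply (m n : N) (t : ℝ) (v : V) :
    B (m + t • (n - m)) v = (1 - t) * B m v + t * B n v := by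
  simp only [map_add, map_smul, map_sub, LinearMap.add_apply, LinearMap.smul_apply,
    LinearMap.sub_apply, smul_eq_mul]
  ring

variable {s} in
lemma IsFace.mem_normalConeB_iff {F : Set V} (hF : IsFace (convexHull ℝ (s : Set V)) F)
    {n : N} : n ∈ normalConeB B (convexHull ℝ ↑s) F ↔ F ⊆ minFace (convexHull ℝ ↑s) (B n) := by
  obtain ⟨p, hp⟩ := hF.algRelInt_nonempty
  refine ⟨fun hn => subset_minFace_of_mem_algRelInt hF.subset hp ⟨hF.subset hp.1, fun q hq => ?_⟩,
    fun hFn p' hp' q hq => ?_⟩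
  · simpa [sub_nonneg] using hn p hp q hq
  · simpa [sub_nonneg] using (hFn hp'.1).2 q hq

variable {s} in
lemma eq_minFace_of_mem_algRelInt_normalConeB (hB : Function.Surjective B) {F : Set V}
    (hF : IsFace (convexHull ℝ (s : Set V)) F) {n : N}
    (hn : n ∈ algRelInt (normalConeB B (convexHull ℝ ↑s) F)) :
    F = minFace (convexHull ℝ ↑s) (B n) := by
  obtain ⟨p, hp⟩ := hF.algRelInt_nonempty
  obtain ⟨f, hFf⟩ := hF.exists_eq_minFace
  obtain ⟨m, rfl⟩ := hB f
  have hnF := (hF.mem_normalConeB_iff B).1 hn.1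
  refine subset_antisymm hnF fun x hx => ?_
  obtain ⟨t, ht, hmt⟩ := hn.2 m ((hF.mem_normalConeB_iff B).2 hFf.le)
  have hpm : p ∈ minFace _ (B m) := hFf ▸ hp.1
  have hpn := hnF hp.1
  have key := hmt p hp x hx.1
  rw [map_add_smul_sub_apply, map_sub, map_sub, le_antisymm (hx.2 p hpn.1) (hpn.2 x hx.1)] at key
  have hxp : B m x ≤ B m p := by nlinarith
  exact hFf ▸ ⟨hx.1, fun y hy => hxp.trans (hpm.2 y hy)⟩

lemma mem_algRelInt_normalConeB_minFace (hs : s.Nonempty) (n : N) :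
    n ∈ algRelInt (normalConeB B (convexHull ℝ ↑s) (minFace (convexHull ℝ ↑s) (B n))) := by
  have hF := isFace_minFace (minFace_convexHull_nonempty s hs (f := B n))
  obtain ⟨p, hp⟩ := hF.algRelInt_nonempty
  refine ⟨(hF.mem_normalConeB_iff B).2 le_rfl, fun m hm => ?_⟩
  rw [hF.mem_normalConeB_iff B] at hm
  have hb : ∀ x ∈ s, 0 ≤ B n (x - p) := fun x hx => by
    simpa [sub_nonneg] using hp.1.2 x (subset_convexHull ℝ _ hx)
  have hab : ∀ x ∈ s, B n (x - p) = 0 → B m (x - p) ≤ 0 := fun x hx h0 => by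
    have hxn : x ∈ minFace (convexHull ℝ ↑s) (B n) := by
      rw [map_sub, sub_eq_zero] at h0
      exact ⟨subset_convexHull ℝ _ hx, fun y hy => h0 ▸ hp.1.2 y hy⟩
    simpa [sub_nonpos] using (hm hxn).2 p (hm hp.1).1
  obtain ⟨ε, hε, hεs⟩ := exists_pos_forall_mul_le s hb hab
  refine ⟨1 + ε, by linarith, (hF.mem_normalConeB_iff B).2 (subset_minFace_of_mem_algRelInt
    minFace_subset hp (mem_minFace_convexHull s hp.1.1 fun x hx => ?_))⟩
  have hεx := hεs x hx
  have hbx := hb x hx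
  rw [← sub_nonneg, ← map_sub, map_add_smul_sub_apply]
  nlinarith

lemma setOf_minFace_subset_eq_iUnion (hB : Function.Surjective B) (hs : s.Nonempty) (n : N) :
    {m : N | minFace (convexHull ℝ ↑s) (B m) ⊆ minFace (convexHull ℝ ↑s) (B n)} =
      ⋃ (F : Set V) (_ : IsFace (convexHull ℝ ↑s) F ∧ n ∈ normalConeB B (convexHull ℝ ↑s) F),
        algRelInt (normalConeB B (convexHull ℝ ↑s) F) := by
  ext m
  simp only [Set.mem_ofPred_eq, Set.mem_iUnion, exists_prop]
  constructor
  · intro h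
    have hF := isFace_minFace (minFace_convexHull_nonempty s hs (f := B m))
    exact ⟨_, ⟨hF, (hF.mem_normalConeB_iff B).2 h⟩, mem_algRelInt_normalConeB_minFace B s hs m⟩
  · rintro ⟨F, ⟨hF, hnF⟩, hmF⟩
    rw [← eq_minFace_of_mem_algRelInt_normalConeB B hB hF hmF]
    exact (hF.mem_normalConeB_iff B).1 hnF

lemma eventually_forall_lt_imp_lt [FiniteDimensional ℝ N] (n : N) :
    ∀ᶠ m in 𝓝 n, ∀ x ∈ s, ∀ y ∈ s, B n x < B n y → B m x < B m y := by
  have hcont (x : V) : Continuous fun m : N => B m x := (B.flip x).continuous_of_finiteDimensional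
  refine (eventually_all_finset s).2 fun x _ => (eventually_all_finset s).2 fun y _ => ?_
  by_cases h : B n x < B n y
  · exact ((hcont x).continuousAt.eventually_lt (hcont y).continuousAt h).mono fun _ hm _ => hm
  · exact .of_forall fun _ h' => absurd h' h

lemma setOf_minFace_subset_mem_nhds [FiniteDimensional ℝ N] (n : N) :
    {m : N | minFace (convexHull ℝ ↑s) (B m) ⊆ minFace (convexHull ℝ ↑s) (B n)} ∈ 𝓝 n := by
  filter_upwards [eventually_forall_lt_imp_lt B s n] with m hm
  rw [minFace_convexHull_eq s (f := B m)]
  refine convexHull_min (fun x ⟨hxs, hx⟩ => mem_minFace_convexHull s hx.1 fun y hy => ?_)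
    (convex_convexHull ℝ _).minFace
  by_contra! h
  exact (hm y hy x hxs h).not_ge (hx.2 y (subset_convexHull ℝ _ hy))

end NormalFan

theorem statement8_general [FiniteDimensional ℝ N]
    -- `N` is (a model of) the dual space of `V`
    (B : N →ₗ[ℝ] Module.Dual ℝ V) (hB : Function.Bijective B)
    (Q : Set V) (hQpoly : ∃ s : Finset V, Q = convexHull ℝ (s : Set V))
    (hQfull : affineSpan ℝ Q = ⊤) :
    -- every `n ∈ N` lies in the relative interior of `𝒞(F)` for exactly one face
    (∀ n : N, ∃! F : Set V, IsFace Q F ∧ n ∈ algRelInt (normalConeB B Q F)) ∧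
    -- for any choice `n ↦ F_n` of such faces, the set `U_n = {m : F_m ⊆ F_n}` is
    -- the union of the relative interiors of the cones `𝒞(F)` containing `n`,
    -- and it is a neighborhood of `n`
    (∀ Fc : N → Set V,
      (∀ n : N, IsFace Q (Fc n) ∧ n ∈ algRelInt (normalConeB B Q (Fc n))) →
      ∀ n : N,
        ({m : N | Fc m ⊆ Fc n} =
          ⋃ (F : Set V) (_ : IsFace Q F ∧ n ∈ normalConeB B Q F),
            algRelInt (normalConeB B Q F)) ∧
        {m : N | Fc m ⊆ Fc n} ∈ nhds n) := by
  obtain ⟨s, rfl⟩ := hQpoly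
  have hs : s.Nonempty := by
    have : (convexHull ℝ (s : Set V)).Nonempty := (affineSpan_nonempty ℝ).1 (hQfull ▸ Set.univ_nonempty)
    exact Finset.coe_nonempty.1 (convexHull_nonempty_iff.1 this)
  refine ⟨fun n => ⟨_, ⟨isFace_minFace (minFace_convexHull_nonempty s hs),
    mem_algRelInt_normalConeB_minFace B s hs n⟩,
    fun F hF => eq_minFace_of_mem_algRelInt_normalConeB B hB.2 hF.1 hF.2⟩, fun Fc hFc n => ?_⟩
  obtain rfl : Fc = fun m => minFace _ (B m) :=
    funext fun m => eq_minFace_of_mem_algRelInt_normalConeB B hB.2 (hFc m).1 (hFc m).2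
  exact ⟨setOf_minFace_subset_eq_iUnion B s hB.2 hs n, setOf_minFace_subset_mem_nhds B s n⟩

theorem statement8 [FiniteDimensional ℝ V] [FiniteDimensional ℝ N]
    -- `N` is (a model of) the dual space of `V`
    (B : N →ₗ[ℝ] Module.Dual ℝ V) (hB : Function.Bijective B)
    (Q : Set V) (hQpoly : ∃ s : Finset V, Q = convexHull ℝ (s : Set V))
    (hQfull : affineSpan ℝ Q = ⊤) :
    -- every `n ∈ N` lies in the relative interior of `𝒞(F)` for exactly one face
    (∀ n : N, ∃! F : Set V, IsFace Q F ∧ n ∈ algRelInt (normalConeB B Q F)) ∧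
    -- for any choice `n ↦ F_n` of such faces, the set `U_n = {m : F_m ⊆ F_n}` is
    -- the union of the relative interiors of the cones `𝒞(F)` containing `n`,
    -- and it is a neighborhood of `n`
    (∀ Fc : N → Set V,
      (∀ n : N, IsFace Q (Fc n) ∧ n ∈ algRelInt (normalConeB B Q (Fc n))) →
      ∀ n : N,
        ({m : N | Fc m ⊆ Fc n} =
          ⋃ (F : Set V) (_ : IsFace Q F ∧ n ∈ normalConeB B Q F),
            algRelInt (normalConeB B Q F)) ∧
        {m : N | Fc m ⊆ Fc n} ∈ nhds n) :=
  statement8_general B hB Q hQpoly hQfull
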